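/- arXiv:1708.00978 — 3 statements merged into one kernel-verified Lean document; each statement's English description precedes it below -/
import Mathlib

section
/- Let ρ be an n×n density matrix (positive semidefinite, trace 1) with eigenvalues λ_1,...,λ_n, and let f be a regular symmetric normalized operator monotone function (f(0)>0, f(1)=1, f(t)=t·f(1/t)). Define Q^f(ρ) = (f(0)/2) ∑_{k,l=1}^n (λ_k − λ_l)²/m^f(λ_k, λ_l) (terms with λ_k = λ_l = 0 interpreted as 0), where m^f(x,y) = x·f(y/x). Then 0 ≤ Q^f(ρ) ≤ n − 1. -/
open scoped ComplexOrder

/-- `f` is operator monotone (on positive semidefinite matrices), via the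
functional calculus for Hermitian matrices. -/
def OperatorMonotone (f : ℝ → ℝ) : Prop :=
  ∀ (n : ℕ) (A B : Matrix (Fin n) (Fin n) ℂ) (hA : A.PosSemidef) (hB : B.PosSemidef),
    (B - A).PosSemidef → (hB.1.cfc f - hA.1.cfc f).PosSemidef

/-- The mean `m^f(x,y) = x·f(y/x)` adjusted by `f`, extended by continuity
(using the symmetry of `f`) to the boundary: `m^f(0,y) = y·f(0)`. -/
noncomputable def adjustedMean (f : ℝ → ℝ) (x y : ℝ) : ℝ :=
  if x = 0 then y * f 0 else x * f (y / x)

/-- The quantum uncertainty measure `Q^f(ρ)` in its spectral form. -/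
noncomputable def Qf (f : ℝ → ℝ) {n : ℕ} (ρ : Matrix (Fin n) (Fin n) ℂ)
    (hρ : ρ.IsHermitian) : ℝ :=
  (f 0 / 2) * ∑ k, ∑ l,
    (hρ.eigenvalues k - hρ.eigenvalues l) ^ 2
      / adjustedMean f (hρ.eigenvalues k) (hρ.eigenvalues l)

/-! Operator monotonicity on `1 × 1` matrices makes `f` monotone on `[0, ∞)`, hence
`m^f(x, y) ≥ f(0) · max(x, y)`; for `y > x` this uses the symmetry `m^f(x, y) = m^f(y, x)` that
`f(t) = t f(1/t)` provides. As `(x - y)² ≤ max(x, y) (x + y)`, each term of `Q^f(ρ)` satisfies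
`f(0) (λₖ - λₗ)² / m^f(λₖ, λₗ) ≤ λₖ + λₗ`, and summing over `k ≠ l` gives
`Q^f(ρ) ≤ (n - 1) ∑ λₖ = n - 1`. -/

lemma Matrix.posSemidef_algebraMap_iff {n : Type*} [Fintype n] [DecidableEq n] [Nonempty n]
    {r : ℝ} : (algebraMap ℝ (Matrix n n ℂ) r).PosSemidef ↔ 0 ≤ r := by
  rw [Matrix.algebraMap_eq_diagonal, Matrix.posSemidef_diagonal_iff]
  simp

lemma OperatorMonotone.monotoneOn {f : ℝ → ℝ} (hf : OperatorMonotone f) :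
    MonotoneOn f (Set.Ici 0) := by
  intro a ha b hb hab
  let M : ℝ → Matrix (Fin 1) (Fin 1) ℂ := algebraMap ℝ _
  have hM : ∀ {r : ℝ}, 0 ≤ r → (M r).PosSemidef := Matrix.posSemidef_algebraMap_iff.2
  have h := hf 1 (M a) (M b) (hM ha) (hM hb) (by rw [← map_sub]; exact hM (sub_nonneg.2 hab))
  rw [← Matrix.IsHermitian.cfc_eq, ← Matrix.IsHermitian.cfc_eq, cfc_algebraMap, cfc_algebraMap,
    ← map_sub, Matrix.posSemidef_algebraMap_iff] at h
  exact sub_nonneg.1 h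

section Mean

variable {f : ℝ → ℝ} {x y : ℝ}

lemma adjustedMean_symm_of_pos (hsym : ∀ t > (0:ℝ), f t = t * f t⁻¹) (hx : 0 < x) (hy : 0 < y) :
    adjustedMean f x y = adjustedMean f y x := by
  rw [adjustedMean, adjustedMean, if_neg hx.ne', if_neg hy.ne', hsym _ (div_pos hy hx), inv_div]
  field_simp

lemma mul_max_le_adjustedMean (hf : MonotoneOn f (Set.Ici 0))
    (hsym : ∀ t > (0:ℝ), f t = t * f t⁻¹) (hx : 0 ≤ x) (hy : 0 ≤ y) :
    f 0 * max x y ≤ adjustedMean f x y := by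
  have hf0 : ∀ {t : ℝ}, 0 ≤ t → f 0 ≤ f t := fun ht => hf Set.self_mem_Ici ht ht
  rcases hx.eq_or_lt with rfl | hx
  · simp [adjustedMean, max_eq_right hy, mul_comm]
  rcases le_total y x with hyx | hxy
  · rw [max_eq_left hyx, adjustedMean, if_neg hx.ne', mul_comm]
    exact mul_le_mul_of_nonneg_left (hf0 (div_nonneg hy hx.le)) hx.le
  · have hy' := hx.trans_le hxy
    rw [max_eq_right hxy, adjustedMean_symm_of_pos hsym hx hy', adjustedMean, if_neg hy'.ne',
      mul_comm]
    exact mul_le_mul_of_nonneg_left (hf0 (div_nonneg hx.le hy'.le)) hy'.le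

lemma adjustedMean_nonneg (hf : MonotoneOn f (Set.Ici 0))
    (hsym : ∀ t > (0:ℝ), f t = t * f t⁻¹) (hf0 : 0 < f 0) (hx : 0 ≤ x) (hy : 0 ≤ y) :
    0 ≤ adjustedMean f x y :=
  (mul_nonneg hf0.le (le_max_of_le_left hx)).trans (mul_max_le_adjustedMean hf hsym hx hy)

lemma mul_sq_sub_div_adjustedMean_le (hf : MonotoneOn f (Set.Ici 0))
    (hsym : ∀ t > (0:ℝ), f t = t * f t⁻¹) (hf0 : 0 < f 0) (hx : 0 ≤ x) (hy : 0 ≤ y) :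
    f 0 * ((x - y) ^ 2 / adjustedMean f x y) ≤ x + y := by
  rcases eq_or_ne x y with rfl | hxy
  · rw [sub_self, zero_pow two_ne_zero, zero_div, mul_zero]
    linarith
  have hmax : 0 < max x y := lt_of_le_of_ne (le_max_of_le_left hx)
    (fun h => hxy (by linarith [le_max_left x y, le_max_right x y]))
  have hsq : (x - y) ^ 2 ≤ max x y * (x + y) := by
    rcases le_total x y with h | h
    · rw [max_eq_right h]; nlinarith
    · rw [max_eq_left h]; nlinarith
  calc f 0 * ((x - y) ^ 2 / adjustedMean f x y)
      ≤ f 0 * ((x - y) ^ 2 / (f 0 * max x y)) := by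
        gcongr
        exact mul_max_le_adjustedMean hf hsym hx hy
    _ = (x - y) ^ 2 / max x y := by field_simp
    _ ≤ x + y := by rwa [div_le_iff₀' hmax]

end Mean

lemma sum_sum_ite_eq_zero_add {ι R : Type*} [Fintype ι] [DecidableEq ι] [CommRing R]
    (a : ι → R) :
    ∑ k, ∑ l, (if k = l then 0 else a k + a l) = 2 * (Fintype.card ι - 1) * ∑ k, a k := by
  have h : ∀ k l, (if k = l then 0 else a k + a l) = a k + a l - if k = l then 2 * a k else 0 := by
    intro k l
    split_ifs with h
    · rw [h]; ring
    · ring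
  simp only [h, Finset.sum_sub_distrib, Finset.sum_add_distrib, Finset.sum_ite_eq,
    Finset.mem_univ, if_true, Finset.sum_const, Finset.card_univ, nsmul_eq_mul, ← Finset.mul_sum]
  ring

theorem Qf_nonneg_and_le_general
    (f : ℝ → ℝ) (hmono : OperatorMonotone f)
    (hsym : ∀ t > (0:ℝ), f t = t * f t⁻¹) (hreg : 0 < f 0)
    {n : ℕ} (ρ : Matrix (Fin n) (Fin n) ℂ) (hρ : ρ.PosSemidef) (htr : ρ.trace = 1) :
    0 ≤ Qf f ρ hρ.1 ∧ Qf f ρ hρ.1 ≤ (n : ℝ) - 1 := by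
  have hf := hmono.monotoneOn
  set ev := hρ.1.eigenvalues
  have hev : ∀ i, 0 ≤ ev i := hρ.eigenvalues_nonneg
  have hsum : ∑ i, ev i = 1 := by
    have h := hρ.1.trace_eq_sum_eigenvalues
    rw [htr] at h
    simpa using congrArg Complex.re h.symm
  have hQf : Qf f ρ hρ.1 =
      (∑ k, ∑ l, f 0 * ((ev k - ev l) ^ 2 / adjustedMean f (ev k) (ev l))) / 2 := by
    simp only [Qf, ← Finset.mul_sum]
    ring
  constructor
  · rw [hQf]
    refine div_nonneg (Finset.sum_nonneg fun k _ => Finset.sum_nonneg fun l _ => ?_) zero_le_two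
    exact mul_nonneg hreg.le
      (div_nonneg (sq_nonneg _) (adjustedMean_nonneg hf hsym hreg (hev k) (hev l)))
  · calc Qf f ρ hρ.1 ≤ (∑ k, ∑ l, if k = l then 0 else ev k + ev l) / 2 := by
          rw [hQf]
          gcongr with k _ l _
          split_ifs with h
          · simp [h]
          · exact mul_sq_sub_div_adjustedMean_le hf hsym hreg (hev k) (hev l)
      _ = n - 1 := by
          rw [sum_sum_ite_eq_zero_add, hsum, Fintype.card_fin]
          ring

/-- For a density matrix `ρ` on an `n`-dimensional system and a regular symmetric
normalized operator monotone function `f`, the quantum uncertainty `Q^f(ρ)`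
satisfies `0 ≤ Q^f(ρ) ≤ n - 1`. -/
theorem Qf_nonneg_and_le
    (f : ℝ → ℝ) (hmono : OperatorMonotone f) (hnorm : f 1 = 1)
    (hsym : ∀ t > (0:ℝ), f t = t * f t⁻¹) (hreg : 0 < f 0)
    {n : ℕ} (ρ : Matrix (Fin n) (Fin n) ℂ) (hρ : ρ.PosSemidef) (htr : ρ.trace = 1) :
    0 ≤ Qf f ρ hρ.1 ∧ Qf f ρ hρ.1 ≤ (n : ℝ) - 1 :=
  Qf_nonneg_and_le_general f hmono hsym hreg ρ hρ htr
end

section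
/- For every regular symmetric normalized operator monotone f and every density matrix ρ, Q^f(ρ) ≤ Q^{SLD}(ρ), where f^{SLD}(t) = (t+1)/2. Equivalently, using the spectral formula, (f(0)/2)∑_{k,l}(λ_k−λ_l)²/m^f(λ_k,λ_l) ≤ (1/4)∑_{k,l}(λ_k−λ_l)²·2/(λ_k+λ_l) = ∑_{k,l}[(λ_k+λ_l)/2 − 2λ_kλ_l/(λ_k+λ_l)]. -/
open scoped ComplexOrder

/-!
Term by term, the inequality reduces to `m^f(x, y) ≥ f(0)(x + y)`, i.e. `f(0)(1 + t) ≤ f(t)`: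
then `f(0)/2 · (x - y)² / m^f(x, y) ≤ (x - y)² / (2(x + y))`, the gap between the arithmetic and
the harmonic mean.

That scalar bound comes from operator monotonicity on `2 × 2` matrices. For `u = (√w, √(1 - w))`
and `w s < t`, the matrix `A = s • u u*` lies below some `B = diag(t, μ)`. Both have two-point
spectra, so `f(A) = f(0) + (f(s) - f(0)) • u u*` and `f(B) = diag(f(t), f(μ))`, and the `(0, 0)`
entry of `f(B) - f(A) ≥ 0` reads `(1 - w) f(0) + w f(s) ≤ f(t)`. Symmetry gives
`f(s) = s f(1/s) ≥ s f(0)`, and letting `w → 0`, `w s → t` yields `f(0)(1 + t) ≤ f(t)`.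
-/

open Matrix Filter Topology

lemma cfc_algebraMap_add_smul_of_isIdempotentElem {A : Type*} [Ring A] [StarRing A]
    [Algebra ℝ A] [TopologicalSpace A] [ContinuousFunctionalCalculus ℝ A IsSelfAdjoint]
    [ContinuousMap.UniqueHom ℝ A]
    {P : A} (hP : IsSelfAdjoint P) (hPP : IsIdempotentElem P) (f : ℝ → ℝ) (a c : ℝ) :
    cfc f (algebraMap ℝ A a + c • P) = algebraMap ℝ A (f a) + (f (a + c) - f a) • P := by
  have hline : algebraMap ℝ A a + c • P = cfc (fun z : ℝ => a + c * z) P := by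
    rw [cfc_const_add a _ P, cfc_const_mul c _ P, cfc_id' ℝ P]
  rw [hline, ← cfc_comp' f (fun z : ℝ => a + c * z) P
    (((hPP.finite_spectrum ℝ).image _).continuousOn f)]
  calc cfc (fun z => f (a + c * z)) P = cfc (fun z : ℝ => f a + (f (a + c) - f a) * z) P := by
        refine cfc_congr fun z hz => ?_
        rcases hPP.spectrum_subset ℝ hz with rfl | rfl <;> simp
    _ = _ := by rw [cfc_const_add _ _ P, cfc_const_mul _ _ P, cfc_id' ℝ P]

lemma Matrix.isIdempotentElem_vecMulVec_self_star {n R : Type*} [Fintype n] [CommSemiring R]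
    [StarRing R] {u : n → R} (hu : star u ⬝ᵥ u = 1) : IsIdempotentElem (vecMulVec u (star u)) := by
  rw [IsIdempotentElem, vecMulVec_mul_vecMulVec, hu, one_smul]

lemma Matrix.exists_smul_vecMulVec_add_vecMulVec_eq_diagonal {s c d t : ℝ} (h : s * c ^ 2 < t) :
    ∃ (v : Fin 2 → ℂ) (μ : ℝ), s • vecMulVec ![(c : ℂ), d] (star ![(c : ℂ), d]) +
      vecMulVec v (star v) = diagonal ![(t : ℂ), μ] := by
  set r := √(t - s * c ^ 2)
  have hr2 : r ^ 2 = t - s * c ^ 2 := Real.sq_sqrt (by linarith)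
  have hr0 : (r : ℂ) ≠ 0 := Complex.ofReal_ne_zero.2 (Real.sqrt_pos.2 (by linarith)).ne'
  refine ⟨![r, -(s * c * d / r)], s * d ^ 2 + (s * c * d / r) ^ 2, ?_⟩
  ext i j
  simp only [Matrix.add_apply, Matrix.smul_apply, vecMulVec_apply, Pi.star_apply]
  fin_cases i <;> fin_cases j <;> simp [hr0]
  · exact_mod_cast (by linear_combination hr2 : s * (c * c) + r * r = t)
  · rw [mul_div_cancel₀ _ hr0]; ring
  all_goals ring

lemma Matrix.cfc_smul_vecMulVec_self_star {n : Type*} [Fintype n] [DecidableEq n] {u : n → ℂ}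
    (hu : star u ⬝ᵥ u = 1) (f : ℝ → ℝ) (s : ℝ) :
    cfc f (s • vecMulVec u (star u)) =
      algebraMap ℝ _ (f 0) + (f s - f 0) • vecMulVec u (star u) := by
  simpa using cfc_algebraMap_add_smul_of_isIdempotentElem
    (posSemidef_vecMulVec_self_star u).isHermitian (isIdempotentElem_vecMulVec_self_star hu) f 0 s

lemma Matrix.cfc_diagonal_fin_two (f : ℝ → ℝ) (t μ : ℝ) :
    cfc f (diagonal ![(t : ℂ), μ]) = diagonal ![(f t : ℂ), f μ] := by
  set E : Matrix (Fin 2) (Fin 2) ℂ := diagonal ![0, 1]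
  have hE : E.IsHermitian := isHermitian_diagonal_of_self_adjoint _ (by ext i; fin_cases i <;> simp)
  have hEE : IsIdempotentElem E := by
    rw [IsIdempotentElem, diagonal_mul_diagonal]
    congr 1
    ext i
    fin_cases i <;> simp
  have hdiag (a b : ℝ) : diagonal ![(a : ℂ), b] = algebraMap ℝ _ a + (b - a) • E := by
    ext i j
    fin_cases i <;> fin_cases j <;> simp [E, algebraMap_matrix_apply]
  rw [hdiag, hdiag, cfc_algebraMap_add_smul_of_isIdempotentElem hE hEE, add_sub_cancel]

lemma OperatorMonotone.one_sub_mul_add_mul_le {f : ℝ → ℝ} (hf : OperatorMonotone f)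
    {w s t : ℝ} (hw₀ : 0 ≤ w) (hw₁ : w ≤ 1) (hs : 0 ≤ s) (hwst : w * s < t) :
    (1 - w) * f 0 + w * f s ≤ f t := by
  set c := √w
  have hc : c * c = w := Real.mul_self_sqrt hw₀
  set u : Fin 2 → ℂ := ![c, √(1 - w)]
  have hu : star u ⬝ᵥ u = 1 := by
    simp only [u, dotProduct, Fin.sum_univ_two, Pi.star_apply]
    simp
    exact_mod_cast (by rw [hc, Real.mul_self_sqrt (by linarith)]; ring :
      c * c + √(1 - w) * √(1 - w) = 1)
  obtain ⟨v, μ, hB⟩ := exists_smul_vecMulVec_add_vecMulVec_eq_diagonal (c := c) (d := √(1 - w))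
    (by rwa [sq, hc, mul_comm])
  have hA := (posSemidef_vecMulVec_self_star u).smul hs
  have hBA := posSemidef_vecMulVec_self_star v
  have key := (hf 2 _ _ hA (hA.add hBA) (by simpa using hBA)).diag_nonneg (i := 0)
  rw [← IsHermitian.cfc_eq, ← IsHermitian.cfc_eq, hB, cfc_diagonal_fin_two,
    cfc_smul_vecMulVec_self_star hu] at key
  simp only [Matrix.sub_apply, Matrix.add_apply, Matrix.smul_apply, algebraMap_matrix_apply,
    if_true, u, vecMulVec_apply, diagonal_apply_eq, Pi.star_apply] at key
  simp at key
  have key' : f 0 + (f s - f 0) * (c * c) ≤ f t := by exact_mod_cast key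
  rw [hc] at key'
  linarith

namespace OperatorMonotone

variable {f : ℝ → ℝ} (hf : OperatorMonotone f)
include hf

lemma apply_zero_le {t : ℝ} (ht : 0 < t) : f 0 ≤ f t := by
  simpa using hf.one_sub_mul_add_mul_le le_rfl zero_le_one le_rfl (s := 0) (by simpa using ht)

variable (hsym : ∀ t > (0 : ℝ), f t = t * f t⁻¹)
include hsym

lemma mul_apply_zero_le {s : ℝ} (hs : 0 < s) : s * f 0 ≤ f s := by
  rw [hsym s hs]
  exact mul_le_mul_of_nonneg_left (hf.apply_zero_le (inv_pos.2 hs)) hs.le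

lemma apply_zero_mul_one_add_le {t : ℝ} (ht : 0 ≤ t) : f 0 * (1 + t) ≤ f t := by
  rcases ht.eq_or_lt with rfl | ht
  · simp
  have approx : ∀ δ ∈ Set.Ioo 0 (min 1 t), f 0 * (1 + t) - 2 * δ * f 0 ≤ f t := by
    rintro δ ⟨hδ, hδ'⟩
    have hδ1 : δ < 1 := hδ'.trans_le (min_le_left _ _)
    have hδt : δ < t := hδ'.trans_le (min_le_right _ _)
    have hs : 0 < (t - δ) / δ := div_pos (by linarith) hδ
    calc f 0 * (1 + t) - 2 * δ * f 0 = (1 - δ) * f 0 + δ * ((t - δ) / δ * f 0) := by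
          field_simp; ring
      _ ≤ (1 - δ) * f 0 + δ * f ((t - δ) / δ) := by
          gcongr; exact hf.mul_apply_zero_le hsym hs
      _ ≤ f t := hf.one_sub_mul_add_mul_le hδ.le hδ1.le hs.le (by field_simp; linarith)
  have hlim : Tendsto (fun δ : ℝ => f 0 * (1 + t) - 2 * δ * f 0) (𝓝[>] 0) (𝓝 (f 0 * (1 + t))) :=
    ((Continuous.tendsto' (by fun_prop) 0 _ (by simp))).mono_left nhdsWithin_le_nhds
  exact le_of_tendsto hlim (eventually_of_mem (Ioo_mem_nhdsGT (lt_min one_pos ht)) approx)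

lemma apply_zero_mul_add_le_adjustedMean {x y : ℝ} (hx : 0 ≤ x) (hy : 0 ≤ y) :
    f 0 * (x + y) ≤ adjustedMean f x y := by
  unfold adjustedMean
  split_ifs with hx0
  · simp [hx0, mul_comm]
  · have hx' : 0 < x := hx.lt_of_ne' hx0
    calc f 0 * (x + y) = x * (f 0 * (1 + y / x)) := by field_simp
      _ ≤ x * f (y / x) := by
          gcongr; exact hf.apply_zero_mul_one_add_le hsym (by positivity)

lemma apply_zero_div_two_mul_sq_sub_div_adjustedMean_le (hreg : 0 < f 0) {a b : ℝ}
    (ha : 0 ≤ a) (hb : 0 ≤ b) :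
    f 0 / 2 * ((a - b) ^ 2 / adjustedMean f a b) ≤ (a + b) / 2 - 2 * a * b / (a + b) := by
  have am_sub_hm : (a + b) / 2 - 2 * a * b / (a + b) = (a - b) ^ 2 / (2 * (a + b)) := by
    rcases eq_or_ne (a + b) 0 with hab | hab
    · simp [hab]
    · field_simp; ring
  rw [am_sub_hm]
  rcases (add_nonneg ha hb).eq_or_lt with hab | hab
  · obtain ⟨rfl, rfl⟩ : a = 0 ∧ b = 0 := ⟨by linarith, by linarith⟩
    simp
  calc f 0 / 2 * ((a - b) ^ 2 / adjustedMean f a b)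
      ≤ f 0 / 2 * ((a - b) ^ 2 / (f 0 * (a + b))) := by
        gcongr; exact hf.apply_zero_mul_add_le_adjustedMean hsym ha hb
    _ = (a - b) ^ 2 / (2 * (a + b)) := by field_simp

end OperatorMonotone

theorem Qf_le_Qsld_general
    (f : ℝ → ℝ) (hmono : OperatorMonotone f)
    (hsym : ∀ t > (0:ℝ), f t = t * f t⁻¹) (hreg : 0 < f 0)
    {n : ℕ} (ρ : Matrix (Fin n) (Fin n) ℂ) (hρ : ρ.PosSemidef) :
    (f 0 / 2) * ∑ k, ∑ l,
        (hρ.1.eigenvalues k - hρ.1.eigenvalues l) ^ 2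
          / adjustedMean f (hρ.1.eigenvalues k) (hρ.1.eigenvalues l)
      ≤ ∑ k, ∑ l, ((hρ.1.eigenvalues k + hρ.1.eigenvalues l) / 2
          - 2 * hρ.1.eigenvalues k * hρ.1.eigenvalues l
            / (hρ.1.eigenvalues k + hρ.1.eigenvalues l)) := by
  simp_rw [Finset.mul_sum]
  exact Finset.sum_le_sum fun k _ => Finset.sum_le_sum fun l _ =>
    hmono.apply_zero_div_two_mul_sq_sub_div_adjustedMean_le hsym hreg
      (hρ.eigenvalues_nonneg k) (hρ.eigenvalues_nonneg l)

/-- For every regular symmetric normalized operator monotone `f` and every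
density matrix `ρ`, `Q^f(ρ) ≤ Q^{SLD}(ρ)`, the `Q` of `f^{SLD}(t) = (t+1)/2`,
expressed spectrally. -/
theorem Qf_le_Qsld
    (f : ℝ → ℝ) (hmono : OperatorMonotone f) (hnorm : f 1 = 1)
    (hsym : ∀ t > (0:ℝ), f t = t * f t⁻¹) (hreg : 0 < f 0)
    {n : ℕ} (ρ : Matrix (Fin n) (Fin n) ℂ) (hρ : ρ.PosSemidef) (htr : ρ.trace = 1) :
    (f 0 / 2) * ∑ k, ∑ l,
        (hρ.1.eigenvalues k - hρ.1.eigenvalues l) ^ 2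
          / adjustedMean f (hρ.1.eigenvalues k) (hρ.1.eigenvalues l)
      ≤ ∑ k, ∑ l, ((hρ.1.eigenvalues k + hρ.1.eigenvalues l) / 2
          - 2 * hρ.1.eigenvalues k * hρ.1.eigenvalues l
            / (hρ.1.eigenvalues k + hρ.1.eigenvalues l)) :=
  Qf_le_Qsld_general f hmono hsym hreg ρ hρ
end

section
/- Let ρ^{ab} = ∑_j p_j ρ^a_j ⊗ ρ^b_j be a separable density matrix on ℂ^m ⊗ ℂ^m (p_j ≥ 0, ∑ p_j = 1), and suppose Q^f(σ) ≤ m−1 for every m×m density matrix σ and I^f is convex in the state. If {A_k} and {B_k} are orthonormal bases (k = 1,...,m²) of the m×m Hermitian matrices and additionally I^f(σ^a⊗σ^b, A⊗I + I⊗B) = I^f(σ^a,A) + I^f(σ^b,B) for product states, then F̂^f(ρ^{ab}) := ∑_{k=1}^{m²} I^f(ρ^{ab}, A_k ⊗ I + I ⊗ A_k) ≤ 2m − 2. Hence F̂^f(ρ^{ab}) > 2m−2 implies ρ^{ab} is entangled. -/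
open scoped ComplexOrder Kronecker

/-!
By convexity, `F̂^f` of a separable state is at most the `pⱼ`-average of `F̂^f(ρ^a_j ⊗ ρ^b_j)`;
additivity splits each of these into `Q^f(ρ^a_j) + Q^f(ρ^b_j) ≤ 2(m - 1)`.
-/

open Matrix

namespace Matrix

variable {ι κ : Type*}

theorem IsHermitian.kronecker {R : Type*} [CommMagma R] [StarMul R]
    {x : Matrix ι ι R} {y : Matrix κ κ R} (hx : x.IsHermitian) (hy : y.IsHermitian) :
    (x ⊗ₖ y).IsHermitian := by
  rw [IsHermitian, conjTranspose_kronecker, hx.eq, hy.eq]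

theorem IsHermitian.kronecker_one_add_one_kronecker {R : Type*} [CommSemiring R] [StarRing R]
    [DecidableEq ι] [DecidableEq κ] {x : Matrix ι ι R} {y : Matrix κ κ R}
    (hx : x.IsHermitian) (hy : y.IsHermitian) :
    (x ⊗ₖ (1 : Matrix κ κ R) + (1 : Matrix ι ι R) ⊗ₖ y).IsHermitian :=
  (hx.kronecker isHermitian_one).add (isHermitian_one.kronecker hy)

abbrev IsDensityMatrix {𝕜 : Type*} [RCLike 𝕜] [Fintype ι] (ρ : Matrix ι ι 𝕜) : Prop :=
  ρ.PosSemidef ∧ ρ.trace = 1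

theorem IsDensityMatrix.kronecker {𝕜 : Type*} [RCLike 𝕜] [Fintype ι] [Fintype κ]
    {ρ : Matrix ι ι 𝕜} {σ : Matrix κ κ 𝕜} (hρ : ρ.IsDensityMatrix) (hσ : σ.IsDensityMatrix) :
    (ρ ⊗ₖ σ).IsDensityMatrix :=
  ⟨hρ.1.kronecker hσ.1, by rw [trace_kronecker, hρ.2, hσ.2, one_mul]⟩

end Matrix

theorem Finset.sum_mul_le_of_le_of_sum_eq_one {ι : Type*} {s : Finset ι} {p g : ι → ℝ} {c : ℝ}
    (hp : ∀ j ∈ s, 0 ≤ p j) (hpsum : ∑ j ∈ s, p j = 1) (hg : ∀ j ∈ s, g j ≤ c) :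
    ∑ j ∈ s, p j * g j ≤ c :=
  calc ∑ j ∈ s, p j * g j ≤ ∑ j ∈ s, p j * c :=
        Finset.sum_le_sum fun j hj => mul_le_mul_of_nonneg_left (hg j hj) (hp j hj)
    _ = c := by rw [← Finset.sum_mul, hpsum, one_mul]

theorem separable_Fhat_le_general
    {m : ℕ}
    (If1 : Matrix (Fin m) (Fin m) ℂ → Matrix (Fin m) (Fin m) ℂ → ℝ)
    (If2 : Matrix (Fin m × Fin m) (Fin m × Fin m) ℂ →
      Matrix (Fin m × Fin m) (Fin m × Fin m) ℂ → ℝ)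
    (A : Fin (m ^ 2) → Matrix (Fin m) (Fin m) ℂ)
    (hAherm : ∀ k, (A k).IsHermitian)
    -- `I^f` is convex in the state:
    (hconv : ∀ (N : ℕ) (q : Fin N → ℝ) (σ : Fin N → Matrix (Fin m × Fin m) (Fin m × Fin m) ℂ)
      (H : Matrix (Fin m × Fin m) (Fin m × Fin m) ℂ),
      (∀ j, 0 ≤ q j) → ∑ j, q j = 1 → (∀ j, (σ j).PosSemidef ∧ (σ j).trace = 1) →
      H.IsHermitian →
      If2 (∑ j, (q j : ℂ) • σ j) H ≤ ∑ j, q j * If2 (σ j) H)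
    -- additivity of `I^f` on product states for local observables:
    (hadd : ∀ (σa σb : Matrix (Fin m) (Fin m) ℂ),
      σa.PosSemidef → σa.trace = 1 → σb.PosSemidef → σb.trace = 1 →
      ∀ (Aa Bb : Matrix (Fin m) (Fin m) ℂ), Aa.IsHermitian → Bb.IsHermitian →
      If2 (σa ⊗ₖ σb) (Aa ⊗ₖ (1 : Matrix (Fin m) (Fin m) ℂ)
          + (1 : Matrix (Fin m) (Fin m) ℂ) ⊗ₖ Bb)
        = If1 σa Aa + If1 σb Bb)
    -- the bound `Q^f(σ) ≤ m - 1` on a single factor: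
    (hQ : ∀ σ : Matrix (Fin m) (Fin m) ℂ, σ.PosSemidef → σ.trace = 1 →
      ∑ k, If1 σ (A k) ≤ (m : ℝ) - 1)
    -- a separable state:
    {N : ℕ} (p : Fin N → ℝ) (ρa ρb : Fin N → Matrix (Fin m) (Fin m) ℂ)
    (hp : ∀ j, 0 ≤ p j) (hpsum : ∑ j, p j = 1)
    (hρa : ∀ j, (ρa j).PosSemidef ∧ (ρa j).trace = 1)
    (hρb : ∀ j, (ρb j).PosSemidef ∧ (ρb j).trace = 1)
    (ρab : Matrix (Fin m × Fin m) (Fin m × Fin m) ℂ)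
    (hsep : ρab = ∑ j, (p j : ℂ) • ((ρa j) ⊗ₖ (ρb j))) :
    ∑ k, If2 ρab ((A k) ⊗ₖ (1 : Matrix (Fin m) (Fin m) ℂ)
        + (1 : Matrix (Fin m) (Fin m) ℂ) ⊗ₖ (A k))
      ≤ 2 * m - 2 := by
  have hconvex_bound : ∀ k, If2 ρab ((A k) ⊗ₖ (1 : Matrix (Fin m) (Fin m) ℂ)
      + (1 : Matrix (Fin m) (Fin m) ℂ) ⊗ₖ (A k))
        ≤ ∑ j, p j * (If1 (ρa j) (A k) + If1 (ρb j) (A k)) := by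
    intro k
    rw [hsep]
    refine (hconv N p _ _ hp hpsum (fun j => IsDensityMatrix.kronecker (hρa j) (hρb j))
      ((hAherm k).kronecker_one_add_one_kronecker (hAherm k))).trans_eq ?_
    refine Finset.sum_congr rfl fun j _ => ?_
    rw [hadd _ _ (hρa j).1 (hρa j).2 (hρb j).1 (hρb j).2 _ _ (hAherm k) (hAherm k)]
  have hlocal_bound : ∀ j, ∑ k, (If1 (ρa j) (A k) + If1 (ρb j) (A k)) ≤ 2 * m - 2 := by
    intro j
    rw [Finset.sum_add_distrib]
    linarith [hQ (ρa j) (hρa j).1 (hρa j).2, hQ (ρb j) (hρb j).1 (hρb j).2]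
  calc _ ≤ ∑ k, ∑ j, p j * (If1 (ρa j) (A k) + If1 (ρb j) (A k)) :=
        Finset.sum_le_sum fun k _ => hconvex_bound k
    _ = ∑ j, p j * ∑ k, (If1 (ρa j) (A k) + If1 (ρb j) (A k)) := by
        simp only [Finset.sum_comm (γ := Fin (m ^ 2)), Finset.mul_sum]
    _ ≤ 2 * m - 2 := Finset.sum_mul_le_of_le_of_sum_eq_one (fun j _ => hp j) hpsum
        fun j _ => hlocal_bound j

/-- Entanglement criterion via the metric adjusted skew information: for a
separable state `ρ^{ab} = ∑ pⱼ ρ^a_j ⊗ ρ^b_j` on `ℂ^m ⊗ ℂ^m`, given that the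
skew information `I^f` is convex in the state, additive on product states for
local observables, and that its total over an orthonormal Hermitian basis is
bounded by `m - 1` on each factor, one has
`F̂^f(ρ^{ab}) = ∑_k I^f(ρ^{ab}, A_k ⊗ I + I ⊗ A_k) ≤ 2m - 2`. -/
theorem separable_Fhat_le
    {m : ℕ}
    (If1 : Matrix (Fin m) (Fin m) ℂ → Matrix (Fin m) (Fin m) ℂ → ℝ)
    (If2 : Matrix (Fin m × Fin m) (Fin m × Fin m) ℂ →
      Matrix (Fin m × Fin m) (Fin m × Fin m) ℂ → ℝ)
    (A : Fin (m ^ 2) → Matrix (Fin m) (Fin m) ℂ)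
    (hAherm : ∀ k, (A k).IsHermitian)
    (hAortho : ∀ k l, ((A k) * (A l)).trace = if k = l then 1 else 0)
    -- `I^f` is convex in the state:
    (hconv : ∀ (N : ℕ) (q : Fin N → ℝ) (σ : Fin N → Matrix (Fin m × Fin m) (Fin m × Fin m) ℂ)
      (H : Matrix (Fin m × Fin m) (Fin m × Fin m) ℂ),
      (∀ j, 0 ≤ q j) → ∑ j, q j = 1 → (∀ j, (σ j).PosSemidef ∧ (σ j).trace = 1) →
      H.IsHermitian →
      If2 (∑ j, (q j : ℂ) • σ j) H ≤ ∑ j, q j * If2 (σ j) H)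
    -- additivity of `I^f` on product states for local observables:
    (hadd : ∀ (σa σb : Matrix (Fin m) (Fin m) ℂ),
      σa.PosSemidef → σa.trace = 1 → σb.PosSemidef → σb.trace = 1 →
      ∀ (Aa Bb : Matrix (Fin m) (Fin m) ℂ), Aa.IsHermitian → Bb.IsHermitian →
      If2 (σa ⊗ₖ σb) (Aa ⊗ₖ (1 : Matrix (Fin m) (Fin m) ℂ)
          + (1 : Matrix (Fin m) (Fin m) ℂ) ⊗ₖ Bb)
        = If1 σa Aa + If1 σb Bb)
    -- the bound `Q^f(σ) ≤ m - 1` on a single factor: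
    (hQ : ∀ σ : Matrix (Fin m) (Fin m) ℂ, σ.PosSemidef → σ.trace = 1 →
      ∑ k, If1 σ (A k) ≤ (m : ℝ) - 1)
    -- a separable state:
    {N : ℕ} (p : Fin N → ℝ) (ρa ρb : Fin N → Matrix (Fin m) (Fin m) ℂ)
    (hp : ∀ j, 0 ≤ p j) (hpsum : ∑ j, p j = 1)
    (hρa : ∀ j, (ρa j).PosSemidef ∧ (ρa j).trace = 1)
    (hρb : ∀ j, (ρb j).PosSemidef ∧ (ρb j).trace = 1)
    (ρab : Matrix (Fin m × Fin m) (Fin m × Fin m) ℂ)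
    (hsep : ρab = ∑ j, (p j : ℂ) • ((ρa j) ⊗ₖ (ρb j))) :
    ∑ k, If2 ρab ((A k) ⊗ₖ (1 : Matrix (Fin m) (Fin m) ℂ)
        + (1 : Matrix (Fin m) (Fin m) ℂ) ⊗ₖ (A k))
      ≤ 2 * m - 2 :=
  separable_Fhat_le_general If1 If2 A hAherm hconv hadd hQ p ρa ρb hp hpsum hρa hρb ρab hsep
end
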